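/- Let (L, [·,·,·], d) be a modified λ-differential Lie triple system, (V, θ, d_V) a representation, and (ς, ϖ) a pair of maps with ς : L×L×L → V trilinear and ϖ : L → V linear, where ς is skew-symmetric in its first two arguments and satisfies the cyclic identity ς(a,b,c) + ς(c,a,b) + ς(b,c,a) = 0. Define on L ⊕ V: [a+u, b+v, c+w]_ς = [a,b,c] + θ(b,c)u − θ(a,c)v + D(a,b)w + ς(a,b,c) and d_ϖ(a+u) = d(a) + ϖ(a) + d_V(u). Then (L ⊕ V, [·,·,·]_ς, d_ϖ) is a modified λ-differential Lie triple system if and only if (ς, ϖ) is a 3-cocycle, i.e., δς = 0 and δϖ + Φς = 0, where explicitly: ς(a,b,[x,y,z]) + D(a,b)ς(x,y,z) − ς([a,b,x],y,z) − ς(x,[a,b,y],z) − ς(x,y,[a,b,z]) − θ(y,z)ς(a,b,x) + θ(x,z)ς(a,b,y) − D(x,y)ς(a,b,z) = 0 and θ(b,c)ϖ(a) + ς(d(a),b,c) − θ(a,c)ϖ(b) + ς(a,d(b),c) + D(a,b)ϖ(c) + ς(a,b,d(c)) + λς(a,b,c) − ϖ([a,b,c]) − d_V(ς(a,b,c)) =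 0. -/
import Mathlib


/-- The bracket on `L ⊕ V` twisted by a 3-cochain `ς`:
`[a+u, b+v, c+w]_ς = [a,b,c] + θ(b,c)u − θ(a,c)v + D(a,b)w + ς(a,b,c)`,
where `D(a,b) = θ(b,a) − θ(a,b)`. -/
def extBracket {K L V : Type*} [Field K]
    [AddCommGroup L] [Module K L] [AddCommGroup V] [Module K V]
    (br : L →ₗ[K] L →ₗ[K] L →ₗ[K] L) (θ : L →ₗ[K] L →ₗ[K] V →ₗ[K] V)
    (ς : L →ₗ[K] L →ₗ[K] L →ₗ[K] V) (p q r : L × V) : L × V :=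
  (br p.1 q.1 r.1,
    θ q.1 r.1 p.2 - θ p.1 r.1 q.2 + (θ q.1 p.1 r.2 - θ p.1 q.1 r.2)
      + ς p.1 q.1 r.1)

/-- The operator on `L ⊕ V` twisted by a 1-cochain `ϖ`:
`d_ϖ(a+u) = d(a) + ϖ(a) + d_V(u)`. -/
def extOp {K L V : Type*} [Field K]
    [AddCommGroup L] [Module K L] [AddCommGroup V] [Module K V]
    (d : L →ₗ[K] L) (dV : V →ₗ[K] V) (ϖ : L →ₗ[K] V) (p : L × V) : L × V :=
  (d p.1, ϖ p.1 + dV p.2)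

set_option maxHeartbeats 2000000 in
/-- `(L ⊕ V, [·,·,·]_ς, d_ϖ)` is a modified `λ`-differential Lie triple
system if and only if `(ς, ϖ)` is a 3-cocycle, i.e. `δς = 0` and `δϖ + Φς = 0`. -/
theorem ext_is_mdlts_iff_three_cocycle
    {K L V : Type*} [Field K] [CharZero K]
    [AddCommGroup L] [Module K L] [AddCommGroup V] [Module K V]
    (br : L →ₗ[K] L →ₗ[K] L →ₗ[K] L) (lam : K)
    (hskew : ∀ x y z : L, br x y z + br y x z = 0)
    (hcyc : ∀ x y z : L, br x y z + br z x y + br y z x = 0)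
    (hfund : ∀ a b x y z : L,
      br a b (br x y z) = br (br a b x) y z + br x (br a b y) z + br x y (br a b z))
    (θ : L →ₗ[K] L →ₗ[K] V →ₗ[K] V)
    (hrep1 : ∀ x y a b : L, ∀ v : V,
      θ a b (θ x y v) - θ y b (θ x a v) - θ x (br y a b) v
        + (θ a y (θ x b v) - θ y a (θ x b v)) = 0)
    (hrep2 : ∀ x y a b : L, ∀ v : V,
      θ a b (θ y x v - θ x y v) - (θ y x (θ a b v) - θ x y (θ a b v))
        + θ (br x y a) b v + θ a (br x y b) v = 0)
    (d : L →ₗ[K] L)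
    (hd : ∀ a b c : L,
      d (br a b c) = br (d a) b c + br a (d b) c + br a b (d c) + lam • br a b c)
    (dV : V →ₗ[K] V)
    (hdV : ∀ x y : L, ∀ v : V,
      dV (θ x y v) = θ (d x) y v + θ x (d y) v + θ x y (dV v) + lam • θ x y v)
    (ς : L →ₗ[K] L →ₗ[K] L →ₗ[K] V) (ϖ : L →ₗ[K] V)
    (hςskew : ∀ a b c : L, ς a b c + ς b a c = 0)
    (hςcyc : ∀ a b c : L, ς a b c + ς c a b + ς b c a = 0) :
    ((∀ P Q R : L × V,
        extBracket br θ ς P Q R + extBracket br θ ς Q P R = 0)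
      ∧ (∀ P Q R : L × V,
        extBracket br θ ς P Q R + extBracket br θ ς R P Q
          + extBracket br θ ς Q R P = 0)
      ∧ (∀ A B X Y Z : L × V,
        extBracket br θ ς A B (extBracket br θ ς X Y Z)
          = extBracket br θ ς (extBracket br θ ς A B X) Y Z
            + extBracket br θ ς X (extBracket br θ ς A B Y) Z
            + extBracket br θ ς X Y (extBracket br θ ς A B Z))
      ∧ (∀ A B C : L × V,
        extOp d dV ϖ (extBracket br θ ς A B C)
          = extBracket br θ ς (extOp d dV ϖ A) B C
            + extBracket br θ ς A (extOp d dV ϖ B) C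
            + extBracket br θ ς A B (extOp d dV ϖ C)
            + lam • extBracket br θ ς A B C))
    ↔
    ((∀ a b x y z : L,
        ς a b (br x y z) + (θ b a (ς x y z) - θ a b (ς x y z))
          - ς (br a b x) y z - ς x (br a b y) z - ς x y (br a b z)
          - θ y z (ς a b x) + θ x z (ς a b y)
          - (θ y x (ς a b z) - θ x y (ς a b z)) = 0)
      ∧ (∀ a b c : L,
        θ b c (ϖ a) + ς (d a) b c - θ a c (ϖ b) + ς a (d b) c
          + (θ b a (ϖ c) - θ a b (ϖ c)) + ς a b (d c)
          + lam • ς a b c - ϖ (br a b c) - dV (ς a b c) = 0)) := by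
  constructor
  · rintro ⟨h1, h2, h3, h4⟩
    constructor
    · intro a b x y z
      have H := congrArg Prod.snd (h3 (a, 0) (b, 0) (x, 0) (y, 0) (z, 0))
      simp only [extBracket, Prod.snd_add, Prod.fst_add, map_zero, map_add, map_sub,
        sub_zero, zero_sub, add_zero, zero_add, neg_zero] at H
      linear_combination (norm := module) H
    · intro a b c
      have H := congrArg Prod.snd (h4 (a, 0) (b, 0) (c, 0))
      simp only [extBracket, extOp, Prod.snd_add, Prod.fst_add, Prod.smul_snd,
        Prod.smul_fst, map_zero, map_add, map_sub, smul_add, smul_sub, smul_zero,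
        sub_zero, zero_sub, add_zero, zero_add, neg_zero] at H
      linear_combination (norm := module) -H
  · rintro ⟨hc1, hc2⟩
    have hrep2' : ∀ x y A B : L, ∀ vv : V,
        θ A B (θ y x vv) - θ A B (θ x y vv)
          - (θ y x (θ A B vv) - θ x y (θ A B vv))
          + θ (br x y A) B vv + θ A (br x y B) vv = 0 := by
      intro x y A B vv
      have h := hrep2 x y A B vv
      rwa [map_sub] at h
    refine ⟨?_, ?_, ?_, ?_⟩
    · rintro ⟨a, p⟩ ⟨b, q⟩ ⟨c, r⟩
      refine Prod.ext ?_ ?_ <;>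
        simp only [extBracket, Prod.fst_add, Prod.snd_add, Prod.fst_zero, Prod.snd_zero]
      · linear_combination (norm := module) hskew a b c
      · linear_combination (norm := module) hςskew a b c
    · rintro ⟨a, p⟩ ⟨b, q⟩ ⟨c, r⟩
      refine Prod.ext ?_ ?_ <;>
        simp only [extBracket, Prod.fst_add, Prod.snd_add, Prod.fst_zero, Prod.snd_zero]
      · linear_combination (norm := module) hcyc a b c
      · linear_combination (norm := module) hςcyc a b c
    · rintro ⟨a, p⟩ ⟨b, q⟩ ⟨x, u⟩ ⟨y, v⟩ ⟨z, w⟩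
      refine Prod.ext ?_ ?_ <;>
        simp only [extBracket, Prod.fst_add, Prod.snd_add, map_add, map_sub]
      · linear_combination (norm := module) hfund a b x y z
      · linear_combination (norm := module) (-(hrep1 b x y z p)) + (hrep1 a x y z q)
          - (hrep2' a b y z u) + (hrep2' a b x z v) - (hrep2' a b y x w)
          + (hrep2' a b x y w) + (hc1 a b x y z)
    · rintro ⟨a, p⟩ ⟨b, q⟩ ⟨c, r⟩
      refine Prod.ext ?_ ?_ <;>
        simp only [extBracket, extOp, Prod.fst_add, Prod.snd_add, Prod.smul_fst,
          Prod.smul_snd, map_add, map_sub, smul_add, smul_sub]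
      · linear_combination (norm := module) hd a b c
      · linear_combination (norm := module) (hdV b c p) - (hdV a c q) + (hdV b a r)
          - (hdV a b r) - (hc2 a b c)
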